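/- For every integer n ≥ 3 and every α ∈ (π/2, 3π/4 − π/(2n)), it holds that 2π − π/n − α < dgn_n(α) < 2π − α, where dgn_n(α) = π − arctan( cos²(π/n)·(sin(π/n)+1)⁻²·tan α ). -/

import Mathlib

open Real

noncomputable def dgn (n : ℕ) (α : ℝ) : ℝ :=
  π - Real.arctan ((Real.cos (π/n))^2 * ((Real.sin (π/n) + 1)^2)⁻¹ * Real.tan α)

/-! With `θ = π / n` and `x = α - π ∈ (-π/2, -π/4 - θ/2)`, the coefficient `cos² θ / (sin θ + 1)²`
equals `c = (1 - sin θ) / (1 + sin θ) < 1` and `tan α = tan x`, so the claim becomes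
`x < arctan (c * tan x) < x + θ`. The left inequality holds because `tan x < 0` and `c < 1`; the
right one is `c * tan x < tan (x + θ)`, which after clearing the positive denominators reads
`0 < sin θ * (1 + sin (2 * x + θ))`. -/

namespace Real

lemma cos_sq_mul_inv_sin_add_one_sq {θ : ℝ} (h : sin θ + 1 ≠ 0) :
    cos θ ^ 2 * ((sin θ + 1) ^ 2)⁻¹ = (1 - sin θ) / (1 + sin θ) := by
  rw [add_comm] at h
  rw [cos_sq', add_comm (sin θ)]
  field_simp
  ring

lemma lt_arctan_mul_tan {c x : ℝ} (hc : c < 1) (hx : -(π / 2) < x) (hx0 : x < 0) :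
    x < arctan (c * tan x) := by
  have htan : tan x < 0 := tan_neg_of_neg_of_pi_div_two_lt hx0 hx
  calc x = arctan (tan x) := (arctan_tan hx (by linarith)).symm
    _ < arctan (c * tan x) := arctan_strictMono (by nlinarith)

lemma arctan_lt_of_lt_tan {x y : ℝ} (hx : -(π / 2) < x) (hx' : x < π / 2) (h : y < tan x) :
    arctan y < x := by
  simpa only [arctan_tan hx hx'] using arctan_strictMono h

/-- The two sides differ by `sin θ * (1 + sin (2 * x + θ))`: expand them as
`sin ((x + θ) - x) + sin θ * sin ((x + θ) + x)`. -/
lemma one_sub_sin_div_one_add_sin_mul_tan_lt_tan_add {x θ : ℝ} (hθ : 0 < sin θ)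
    (hx : 0 < cos x) (hxθ : 0 < cos (x + θ)) (h : -1 < sin (2 * x + θ)) :
    (1 - sin θ) / (1 + sin θ) * tan x < tan (x + θ) := by
  have hdiff : (1 + sin θ) * sin (x + θ) * cos x - (1 - sin θ) * sin x * cos (x + θ)
      = sin θ * (1 + sin (2 * x + θ)) := by
    have hsub : sin (x + θ) * cos x - cos (x + θ) * sin x = sin θ := by
      rw [← sin_sub, add_sub_cancel_left]
    have hadd : sin (x + θ) * cos x + cos (x + θ) * sin x = sin (2 * x + θ) := by
      rw [← sin_add]; ring_nf
    linear_combination hsub + sin θ * hadd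
  have hpos : 0 < sin θ * (1 + sin (2 * x + θ)) := mul_pos hθ (by linarith)
  rw [tan_eq_sin_div_cos, tan_eq_sin_div_cos, div_mul_div_comm,
    div_lt_div_iff₀ (by positivity) hxθ]
  nlinarith

lemma arctan_one_sub_sin_div_one_add_sin_mul_tan_mem_Ioo {θ α : ℝ} (hθ : 0 < θ)
    (h1 : π / 2 < α) (h2 : α < 3 * π / 4 - θ / 2) :
    arctan ((1 - sin θ) / (1 + sin θ) * tan α) ∈ Set.Ioo (α - π) (α - π + θ) := by
  have hsin : 0 < sin θ := sin_pos_of_pos_of_lt_pi hθ (by linarith)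
  rw [← tan_sub_pi α]
  refine ⟨lt_arctan_mul_tan ((div_lt_one (by linarith)).2 (by linarith)) (by linarith)
    (by linarith), arctan_lt_of_lt_tan (by linarith) (by linarith) ?_⟩
  have hsin2 : -1 < sin (2 * (α - π) + θ) := by
    have h := sin_lt_sin_of_lt_of_le_pi_div_two (x := 2 * (α - π) + θ + π) (y := π / 2)
      (by linarith) le_rfl (by linarith)
    rw [sin_add_pi, sin_pi_div_two] at h
    linarith
  exact one_sub_sin_div_one_add_sin_mul_tan_lt_tan_add hsin
    (cos_pos_of_mem_Ioo ⟨by linarith, by linarith⟩)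
    (cos_pos_of_mem_Ioo ⟨by linarith, by linarith⟩) hsin2

end Real

theorem stmt6 (n : ℕ) (hn : 3 ≤ n) (α : ℝ)
    (h1 : π/2 < α) (h2 : α < 3*π/4 - π/(2*n)) :
    2*π - π/n - α < dgn n α ∧ dgn n α < 2*π - α := by
  have hθ : 0 < π / n := div_pos pi_pos (Nat.cast_pos.2 (by omega))
  have hθπ : π / n < π := div_lt_self pi_pos (Nat.one_lt_cast.2 (by omega))
  have h2' : α < 3 * π / 4 - π / n / 2 := by rwa [div_div, mul_comm (n : ℝ) 2]
  have hsin : sin (π / n) + 1 ≠ 0 := by linarith [sin_pos_of_pos_of_lt_pi hθ hθπ]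
  obtain ⟨hlow, hup⟩ := arctan_one_sub_sin_div_one_add_sin_mul_tan_mem_Ioo hθ h1 h2'
  rw [dgn, cos_sq_mul_inv_sin_add_one_sq hsin]
  constructor <;> linarith
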